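/- arXiv:1910.11811 — 5 statements merged into one kernel-verified Lean document; each statement's English description precedes it below -/
import Mathlib

section
/- Let (A,V) and (B,W) be permutation groups and let G be a colored graph on V×W using colors from an r-element color set, such that Aut(G) acts transitively on V×W and Aut(G) = A≀B (the imprimitive wreath product). Then there exist a colored graph H1 on V and a colored graph H2 on W, each using colors from the same r-element color set, such that Aut(H1) = A, Aut(H2) = B, and G = H2∘H1. -/
open scoped Classical

/-- The automorphism group of a colored graph, i.e. of a coloring of the
unordered pairs of distinct elements of `V` (values of `E` on diagonal pairs
are irrelevant). -/
def graphAut {V C : Type} (E : Sym2 V → C) : Subgroup (Equiv.Perm V) where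
  carrier := {σ | ∀ v w : V, v ≠ w → E s(σ v, σ w) = E s(v, w)}
  one_mem' := by intro v w _; rfl
  mul_mem' := by
    intro a b ha hb v w hvw
    have hb' := hb v w hvw
    have ha' := ha (b v) (b w) (fun h => hvw (b.injective h))
    simpa [Equiv.Perm.mul_apply] using ha'.trans hb'
  inv_mem' := by
    intro a ha v w hvw
    have h : a⁻¹ v ≠ a⁻¹ w := fun h => hvw (by simpa using congrArg a h)
    have := ha (a⁻¹ v) (a⁻¹ w) h
    simpa using this.symm

/-- The automorphism group of a colored digraph, i.e. of a coloring of the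
ordered pairs of elements of `V`. -/
def digraphAut {V C : Type} (E : V → V → C) : Subgroup (Equiv.Perm V) where
  carrier := {σ | ∀ v w : V, E (σ v) (σ w) = E v w}
  one_mem' := by intro v w; rfl
  mul_mem' := by
    intro a b ha hb v w
    simpa [Equiv.Perm.mul_apply] using (ha (b v) (b w)).trans (hb v w)
  inv_mem' := by
    intro a ha v w
    simpa using (ha (a⁻¹ v) (a⁻¹ w)).symm

/-- The automorphism group of a colored hypergraph, i.e. of a coloring of the
nonempty subsets of `W`. -/
def hyperAut {W C : Type} (E : Set W → C) : Subgroup (Equiv.Perm W) where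
  carrier := {σ | ∀ X : Set W, X.Nonempty → E (⇑σ '' X) = E X}
  one_mem' := by intro X hX; simp
  mul_mem' := by
    intro a b ha hb X hX
    have h1 : ⇑(a * b) '' X = ⇑a '' (⇑b '' X) := by
      rw [Equiv.Perm.coe_mul, Set.image_comp]
    rw [h1, ha _ (hX.image _), hb _ hX]
  inv_mem' := by
    intro a ha X hX
    have h1 : ⇑a '' (⇑a⁻¹ '' X) = X := by
      rw [← Set.image_comp]
      have : ⇑a ∘ ⇑a⁻¹ = id := by funext x; simp
      rw [this, Set.image_id]
    have := ha (⇑a⁻¹ '' X) (hX.image _)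
    rw [h1] at this
    exact this.symm

/-- `A` belongs to the class GR: it is the automorphism group of some colored graph. -/
def IsGR {V : Type} (A : Subgroup (Equiv.Perm V)) : Prop :=
  ∃ (C : Type) (E : Sym2 V → C), graphAut E = A

/-- `A` belongs to the class DGR: it is the automorphism group of some colored digraph. -/
def IsDGR {V : Type} (A : Subgroup (Equiv.Perm V)) : Prop :=
  ∃ (C : Type) (E : V → V → C), digraphAut E = A

/-- `B` belongs to the class BGR: it is the automorphism group of some colored hypergraph. -/
def IsBGR {W : Type} (B : Subgroup (Equiv.Perm W)) : Prop :=
  ∃ (C : Type) (E : Set W → C), hyperAut E = B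

/-- `(A, V)` is (permutation isomorphic to) the trivial permutation group `I₂`
on a two-element set. -/
def IsI2 {V : Type} (A : Subgroup (Equiv.Perm V)) : Prop :=
  A = ⊥ ∧ Nat.card V = 2

/-- The permutation group `A` acts transitively on `V`. -/
def permTransitive {V : Type} (A : Subgroup (Equiv.Perm V)) : Prop :=
  ∀ v w : V, ∃ a ∈ A, a v = w

/-- The orbit of a point under a permutation group. -/
def ptOrbit {V : Type} (A : Subgroup (Equiv.Perm V)) (v : V) : Set V :=
  {u | ∃ a ∈ A, a v = u}

/-- The orbit (2*-orbital) of an unordered pair under a permutation group. -/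
def pairOrbit {V : Type} (A : Subgroup (Equiv.Perm V)) (p : Sym2 V) : Set (Sym2 V) :=
  {q | ∃ a ∈ A, Sym2.map ⇑a p = q}

/-- The orbital of an ordered pair under a permutation group. -/
def orbital {V : Type} (A : Subgroup (Equiv.Perm V)) (x : V × V) : Set (V × V) :=
  {y | ∃ a ∈ A, (a x.1, a x.2) = y}

/-- The closure `cl(A)` of a permutation group `A`: the group of all permutations of `V`
mapping each 2*-orbital of `A` onto itself. -/
def grCl {V : Type} (A : Subgroup (Equiv.Perm V)) : Subgroup (Equiv.Perm V) where
  carrier := {σ | ∀ p : Sym2 V, ¬ p.IsDiag → Sym2.map ⇑σ '' pairOrbit A p = pairOrbit A p}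
  one_mem' := by
    intro p hp
    rw [Equiv.Perm.coe_one, Sym2.map_id, Set.image_id]
  mul_mem' := by
    intro a b ha hb p hp
    rw [Equiv.Perm.coe_mul, Sym2.map_comp, Set.image_comp, hb p hp, ha p hp]
  inv_mem' := by
    intro a ha p hp
    have h1 : Sym2.map ⇑a⁻¹ ∘ Sym2.map ⇑a = id := by
      rw [← Sym2.map_comp]
      have : ⇑a⁻¹ ∘ ⇑a = id := by funext x; simp
      rw [this, Sym2.map_id]
    conv_lhs => rw [← ha p hp, ← Set.image_comp, h1, Set.image_id]

/-- The permutation `α` transposes the orbitals of `A`: it maps every orbital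
onto the orbital paired with it. -/
def TransposesOrbitals {V : Type} (A : Subgroup (Equiv.Perm V)) (α : Equiv.Perm V) : Prop :=
  ∀ x : V × V, (fun y : V × V => (α y.1, α y.2)) '' orbital A x = Prod.swap '' orbital A x

/-- The rank of a permutation group: the (cardinal) number of its orbitals. -/
def orbRank {V : Type} (A : Subgroup (Equiv.Perm V)) : Cardinal :=
  Cardinal.mk {O : Set (V × V) // ∃ x, O = orbital A x}

/-- `nsp A`: the number of pairs `{O, O'}` of distinct mutually paired
(i.e. non-self-paired) orbitals of `A`. -/
noncomputable def nsp {V : Type} (A : Subgroup (Equiv.Perm V)) : ℕ :=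
  Nat.card {O : Set (V × V) // (∃ x, O = orbital A x) ∧ Prod.swap '' O ≠ O} / 2

/-- The type of orbits of a permutation group `(A, V)` on `V`. -/
def orbitType {V : Type} (A : Subgroup (Equiv.Perm V)) : Type :=
  {O : Set V // ∃ v, O = ptOrbit A v}

/-- The imprimitive wreath product `A ≀ B` of permutation groups `(A,V)` and `(B,W)`,
acting on `V × W`. -/
def imprimWr {V W : Type} (A : Subgroup (Equiv.Perm V)) (B : Subgroup (Equiv.Perm W)) :
    Subgroup (Equiv.Perm (V × W)) where
  carrier := {γ | ∃ β ∈ B, ∃ α : W → Equiv.Perm V, (∀ w, α w ∈ A) ∧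
    ∀ p : V × W, γ p = (α p.2 p.1, β p.2)}
  one_mem' := ⟨1, B.one_mem, fun _ => 1, fun _ => A.one_mem, fun p => rfl⟩
  mul_mem' := by
    rintro γ₁ γ₂ ⟨β₁, hβ₁, α₁, hα₁, h₁⟩ ⟨β₂, hβ₂, α₂, hα₂, h₂⟩
    refine ⟨β₁ * β₂, B.mul_mem hβ₁ hβ₂, fun w => α₁ (β₂ w) * α₂ w,
      fun w => A.mul_mem (hα₁ _) (hα₂ _), fun p => ?_⟩
    have h0 : (γ₁ * γ₂) p = γ₁ (γ₂ p) := rfl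
    rw [h0, h₂ p, h₁ (α₂ p.2 p.1, β₂ p.2)]
    rfl
  inv_mem' := by
    rintro γ ⟨β, hβ, α, hα, h⟩
    refine ⟨β⁻¹, B.inv_mem hβ, fun w => (α (β⁻¹ w))⁻¹,
      fun w => A.inv_mem (hα _), fun p => ?_⟩
    have key : γ ((α (β⁻¹ p.2))⁻¹ p.1, β⁻¹ p.2) = p := by
      rw [h]
      simp
    calc γ⁻¹ p = γ⁻¹ (γ ((α (β⁻¹ p.2))⁻¹ p.1, β⁻¹ p.2)) := by rw [key]
    _ = ((α (β⁻¹ p.2))⁻¹ p.1, β⁻¹ p.2) := by simp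

/-- The wreath product `A Wr B` of permutation groups `(A,V)` and `(B,W)` in its
product action on the set `V^W` of functions `W → V`. -/
def prodWr {V W : Type} (A : Subgroup (Equiv.Perm V)) (B : Subgroup (Equiv.Perm W)) :
    Subgroup (Equiv.Perm (W → V)) where
  carrier := {φ | ∃ β ∈ B, ∃ α : W → Equiv.Perm V, (∀ w, α w ∈ A) ∧
    ∀ (f : W → V) (w : W), φ f w = α w (f (β w))}
  one_mem' := ⟨1, B.one_mem, fun _ => 1, fun _ => A.one_mem, fun f w => rfl⟩
  mul_mem' := by
    rintro φ₁ φ₂ ⟨β₁, hβ₁, α₁, hα₁, h₁⟩ ⟨β₂, hβ₂, α₂, hα₂, h₂⟩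
    refine ⟨β₂ * β₁, B.mul_mem hβ₂ hβ₁, fun w => α₁ w * α₂ (β₁ w),
      fun w => A.mul_mem (hα₁ _) (hα₂ _), fun f w => ?_⟩
    have h0 : (φ₁ * φ₂) f = φ₁ (φ₂ f) := rfl
    rw [h0, h₁ (φ₂ f) w, h₂ f (β₁ w)]
    rfl
  inv_mem' := by
    rintro φ ⟨β, hβ, α, hα, h⟩
    refine ⟨β⁻¹, B.inv_mem hβ, fun w => (α (β⁻¹ w))⁻¹,
      fun w => A.inv_mem (hα _), fun f w => ?_⟩
    have hf : f = φ (φ⁻¹ f) := by simp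
    conv_rhs => rw [hf]
    rw [h (φ⁻¹ f) (β⁻¹ w)]
    simp

/-- The parallel multiple `B × I_T` of a permutation group `(B, W)`, acting on `W × T`. -/
def parMul {W : Type} (B : Subgroup (Equiv.Perm W)) (T : Type) :
    Subgroup (Equiv.Perm (W × T)) where
  carrier := {γ | ∃ β ∈ B, ∀ p : W × T, γ p = (β p.1, p.2)}
  one_mem' := ⟨1, B.one_mem, fun p => rfl⟩
  mul_mem' := by
    rintro γ₁ γ₂ ⟨β₁, hβ₁, h₁⟩ ⟨β₂, hβ₂, h₂⟩
    refine ⟨β₁ * β₂, B.mul_mem hβ₁ hβ₂, fun p => ?_⟩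
    have h0 : (γ₁ * γ₂) p = γ₁ (γ₂ p) := rfl
    rw [h0, h₂, h₁]
    rfl
  inv_mem' := by
    rintro γ ⟨β, hβ, h⟩
    refine ⟨β⁻¹, B.inv_mem hβ, fun p => ?_⟩
    have key : γ (β⁻¹ p.1, p.2) = p := by rw [h]; simp
    calc γ⁻¹ p = γ⁻¹ (γ (β⁻¹ p.1, p.2)) := by rw [key]
    _ = (β⁻¹ p.1, p.2) := by simp

/-- The composition `H2 ∘ H1` of a colored graph `H2` on `W` with a colored graph
`H1` on `V`: a colored graph on `V × W`. -/
noncomputable def compGraph {V W C : Type} (H2 : Sym2 W → C) (H1 : Sym2 V → C) :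
    Sym2 (V × W) → C :=
  Sym2.lift ⟨fun p q => if p.2 = q.2 then H1 s(p.1, q.1) else H2 s(p.2, q.2), by
    intro p q
    dsimp only
    by_cases h : p.2 = q.2
    · rw [if_pos h, if_pos h.symm, Sym2.eq_swap]
    · rw [if_neg h, if_neg (fun hh => h hh.symm), Sym2.eq_swap]⟩

/-- The permutation of `V × W` induced by a family `α : W → Equiv.Perm V` and
`β : Equiv.Perm W`. -/
def wrPerm {V W : Type} (α : W → Equiv.Perm V) (β : Equiv.Perm W) : Equiv.Perm (V × W) where
  toFun p := (α p.2 p.1, β p.2)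
  invFun p := ((α (β⁻¹ p.2))⁻¹ p.1, β⁻¹ p.2)
  left_inv p := by simp
  right_inv p := by simp

/-- If a vertex-transitive colored graph `G` on `V × W` (with colors from an
`r`-element color set `C`) has `Aut(G) = A ≀ B`, then there are colored graphs `H1` on `V`
and `H2` on `W` (with the same color set) with `Aut(H1) = A`, `Aut(H2) = B` and
`G = H2 ∘ H1` (as colorings of the unordered pairs of distinct elements). -/
theorem stmt0 {V W C : Type} [Nontrivial V] [Nontrivial W] [Fintype C] (r : ℕ)
    (hC : Fintype.card C = r)
    (A : Subgroup (Equiv.Perm V)) (B : Subgroup (Equiv.Perm W))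
    (G : Sym2 (V × W) → C)
    (htrans : permTransitive (graphAut G))
    (hG : graphAut G = imprimWr A B) :
    ∃ (H1 : Sym2 V → C) (H2 : Sym2 W → C),
      graphAut H1 = A ∧ graphAut H2 = B ∧
        ∀ p : Sym2 (V × W), ¬ p.IsDiag → G p = compGraph H2 H1 p := by
  obtain ⟨v0, v0', hv0⟩ := exists_pair_ne V
  obtain ⟨w0, w0', hw0⟩ := exists_pair_ne W
  -- every "wreath-type" permutation is an automorphism of G
  have key : ∀ (α : W → Equiv.Perm V) (β : Equiv.Perm W), (∀ w, α w ∈ A) → β ∈ B →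
      ∀ p q : V × W, p ≠ q →
        G s((α p.2 p.1, β p.2), (α q.2 q.1, β q.2)) = G s(p, q) := by
    intro α β hα hβ p q hpq
    have hmem : wrPerm α β ∈ graphAut G := by
      rw [hG]; exact ⟨β, hβ, α, hα, fun p => rfl⟩
    have hmem' : ∀ p q : V × W, p ≠ q →
        G s(wrPerm α β p, wrPerm α β q) = G s(p, q) := hmem
    exact hmem' p q hpq
  -- A and B are transitive
  have Btrans : ∀ w w' : W, ∃ β ∈ B, β w = w' := by
    intro w w'
    obtain ⟨σ, hσ, hσw⟩ := htrans (v0, w) (v0, w')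
    rw [hG] at hσ
    obtain ⟨β, hβ, α, hα, h⟩ := hσ
    have h2 := h (v0, w)
    rw [hσw] at h2
    exact ⟨β, hβ, (congrArg Prod.snd h2).symm⟩
  have Atrans : ∀ v v' : V, ∃ a ∈ A, a v = v' := by
    intro v v'
    obtain ⟨σ, hσ, hσv⟩ := htrans (v, w0) (v', w0)
    rw [hG] at hσ
    obtain ⟨β, hβ, α, hα, h⟩ := hσ
    have h2 := h (v, w0)
    rw [hσv] at h2
    exact ⟨α w0, hα w0, (congrArg Prod.fst h2).symm⟩
  -- the two graphs
  obtain ⟨H1, hH1⟩ : ∃ H1 : Sym2 V → C, ∀ a b : V, H1 s(a, b) = G s((a, w0), (b, w0)) :=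
    ⟨Sym2.lift ⟨fun a b => G s((a, w0), (b, w0)), fun a b => by dsimp only; rw [Sym2.eq_swap]⟩,
      fun a b => rfl⟩
  obtain ⟨H2, hH2⟩ : ∃ H2 : Sym2 W → C, ∀ a b : W, H2 s(a, b) = G s((v0, a), (v0, b)) :=
    ⟨Sym2.lift ⟨fun a b => G s((v0, a), (v0, b)), fun a b => by dsimp only; rw [Sym2.eq_swap]⟩,
      fun a b => rfl⟩
  -- the color of a pair within a fiber
  have fib : ∀ (v1 v2 : V) (w : W), v1 ≠ v2 → G s((v1, w), (v2, w)) = H1 s(v1, v2) := by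
    intro v1 v2 w hne
    obtain ⟨β, hβ, hβw⟩ := Btrans w w0
    have h := key (fun _ => 1) β (fun _ => A.one_mem) hβ (v1, w) (v2, w)
      (by simp [Prod.ext_iff, hne])
    rw [hH1 v1 v2]
    have h' : G s((v1, β w), (v2, β w)) = G s((v1, w), (v2, w)) := h
    rw [hβw] at h'
    exact h'.symm
  -- the color of a pair across fibers
  have cross : ∀ (v1 v2 : V) (w1 w2 : W), w1 ≠ w2 →
      G s((v1, w1), (v2, w2)) = H2 s(w1, w2) := by
    intro v1 v2 w1 w2 hne
    obtain ⟨a1, ha1, ha1v⟩ := Atrans v0 v1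
    obtain ⟨a2, ha2, ha2v⟩ := Atrans v0 v2
    have hαmem : ∀ w, (if w = w1 then a1 else if w = w2 then a2 else 1) ∈ A := by
      intro w
      split_ifs
      · exact ha1
      · exact ha2
      · exact A.one_mem
    have h := key (fun w => if w = w1 then a1 else if w = w2 then a2 else 1) 1 hαmem
      B.one_mem (v0, w1) (v0, w2) (by simp [Prod.ext_iff, hne])
    rw [hH2 w1 w2]
    have h' : G s(((if w1 = w1 then a1 else if w1 = w2 then a2 else 1) v0, w1),
        ((if w2 = w1 then a1 else if w2 = w2 then a2 else 1) v0, w2))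
        = G s((v0, w1), (v0, w2)) := h
    rw [if_pos rfl, if_neg hne.symm, if_pos rfl, ha1v, ha2v] at h'
    exact h'
  -- Aut(H1) = A
  have hAutH1 : graphAut H1 = A := by
    ext σ
    constructor
    · intro hσ
      have hσ' : ∀ v w : V, v ≠ w → H1 s(σ v, σ w) = H1 s(v, w) := hσ
      have hmem : wrPerm (fun _ => σ) 1 ∈ graphAut G := by
        show ∀ p q : V × W, p ≠ q →
          G s(wrPerm (fun _ => σ) 1 p, wrPerm (fun _ => σ) 1 q) = G s(p, q)
        rintro ⟨v1, w1⟩ ⟨v2, w2⟩ hpq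
        show G s((σ v1, w1), (σ v2, w2)) = G s((v1, w1), (v2, w2))
        by_cases hww : w1 = w2
        · subst hww
          have hvv : v1 ≠ v2 := fun h => hpq (by rw [h])
          rw [fib _ _ _ (fun h => hvv (σ.injective h)), hσ' _ _ hvv, fib _ _ _ hvv]
        · rw [cross _ _ _ _ hww, cross _ _ _ _ hww]
      rw [hG] at hmem
      obtain ⟨β, hβ, α, hα, h⟩ := hmem
      have hv : ∀ v : V, σ v = α w0 v := fun v => congrArg Prod.fst (h (v, w0))
      have hσα : σ = α w0 := Equiv.ext hv
      rw [hσα]; exact hα w0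
    · intro hσ
      show ∀ v w : V, v ≠ w → H1 s(σ v, σ w) = H1 s(v, w)
      intro v w hvw
      rw [hH1 (σ v) (σ w), hH1 v w]
      exact key (fun _ => σ) 1 (fun _ => hσ) B.one_mem (v, w0) (w, w0)
        (by simp [Prod.ext_iff, hvw])
  -- Aut(H2) = B
  have hAutH2 : graphAut H2 = B := by
    ext σ
    constructor
    · intro hσ
      have hσ' : ∀ v w : W, v ≠ w → H2 s(σ v, σ w) = H2 s(v, w) := hσ
      have hmem : wrPerm (fun _ => 1) σ ∈ graphAut G := by
        show ∀ p q : V × W, p ≠ q →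
          G s(wrPerm (fun _ => 1) σ p, wrPerm (fun _ => 1) σ q) = G s(p, q)
        rintro ⟨v1, w1⟩ ⟨v2, w2⟩ hpq
        show G s((v1, σ w1), (v2, σ w2)) = G s((v1, w1), (v2, w2))
        by_cases hww : w1 = w2
        · subst hww
          have hvv : v1 ≠ v2 := fun h => hpq (by rw [h])
          rw [fib _ _ _ hvv, fib _ _ _ hvv]
        · rw [cross _ _ _ _ (fun h => hww (σ.injective h)), hσ' _ _ hww,
            cross _ _ _ _ hww]
      rw [hG] at hmem
      obtain ⟨β, hβ, α, hα, h⟩ := hmem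
      have hv : ∀ w : W, σ w = β w := fun w => congrArg Prod.snd (h (v0, w))
      have hσβ : σ = β := Equiv.ext hv
      rw [hσβ]; exact hβ
    · intro hσ
      show ∀ v w : W, v ≠ w → H2 s(σ v, σ w) = H2 s(v, w)
      intro v w hvw
      rw [hH2 (σ v) (σ w), hH2 v w]
      exact key (fun _ => 1) σ (fun _ => A.one_mem) hσ (v0, v) (v0, w)
        (by simp [Prod.ext_iff, hvw])
  refine ⟨H1, H2, hAutH1, hAutH2, ?_⟩
  intro p hp
  revert hp
  induction p using Sym2.ind with
  | _ x y =>
    intro hp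
    obtain ⟨v1, w1⟩ := x
    obtain ⟨v2, w2⟩ := y
    have hxy : (v1, w1) ≠ (v2, w2) := by
      intro h
      exact hp (by rw [h]; exact Sym2.mk_isDiag_iff.mpr rfl)
    by_cases hww : w1 = w2
    · subst hww
      have hvv : v1 ≠ v2 := fun h => hxy (by rw [h])
      rw [fib _ _ _ hvv]
      simp [compGraph, hvv]
    · rw [cross _ _ _ _ hww]
      simp [compGraph, hww]
end

section
/- If permutation groups (A,V) and (B,W) both belong to the class GR, then their imprimitive wreath product A≀B belongs to GR. -/
open scoped Classical

/-- If `A` and `B` belong to GR, then the imprimitive wreath product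
`A ≀ B` belongs to GR. -/
theorem stmt1 {V W : Type} [Nontrivial V] [Nontrivial W]
    (A : Subgroup (Equiv.Perm V)) (B : Subgroup (Equiv.Perm W))
    (hA : IsGR A) (hB : IsGR B) : IsGR (imprimWr A B) := by
  obtain ⟨C₁, E₁, hE₁⟩ := hA
  obtain ⟨C₂, E₂, hE₂⟩ := hB
  obtain ⟨v₀⟩ : Nonempty V := inferInstance
  refine ⟨C₁ ⊕ C₂, compGraph (Sum.inr ∘ E₂) (Sum.inl ∘ E₁), ?_⟩
  set E : Sym2 (V × W) → C₁ ⊕ C₂ := compGraph (Sum.inr ∘ E₂) (Sum.inl ∘ E₁) with hEdef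
  have Eval : ∀ p q : V × W, E s(p, q) =
      if p.2 = q.2 then Sum.inl (E₁ s(p.1, q.1)) else Sum.inr (E₂ s(p.2, q.2)) := by
    intro p q
    simp [hEdef, compGraph]
  have hA' : ∀ a ∈ A, ∀ v w : V, v ≠ w → E₁ s(a v, a w) = E₁ s(v, w) := by
    intro a ha; rw [← hE₁] at ha; exact ha
  have hB' : ∀ b ∈ B, ∀ v w : W, v ≠ w → E₂ s(b v, b w) = E₂ s(v, w) := by
    intro b hb; rw [← hE₂] at hb; exact hb
  ext γ
  constructor
  · intro hγ
    -- hγ : γ ∈ graphAut E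
    have hγinv : γ⁻¹ ∈ graphAut E := (graphAut E).inv_mem hγ
    have fib : ∀ δ ∈ graphAut E, ∀ (v v' : V) (w : W), (δ (v, w)).2 = (δ (v', w)).2 := by
      intro δ hδ v v' w
      by_cases hv : v = v'
      · rw [hv]
      · have hne : (v, w) ≠ (v', w) := fun h => hv (congrArg Prod.fst h)
        have hcol := hδ (v, w) (v', w) hne
        rw [Eval, Eval] at hcol
        by_contra h2
        rw [if_neg h2, if_pos rfl] at hcol
        exact Sum.inr_ne_inl hcol
    have fibγ := fib γ hγ
    have fibγ' := fib γ⁻¹ hγinv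
    have hli : ∀ w, (γ⁻¹ (v₀, (γ (v₀, w)).2)).2 = w := by
      intro w
      have := fibγ' v₀ (γ (v₀, w)).1 (γ (v₀, w)).2
      rw [this]
      have h3 : ((γ (v₀, w)).1, (γ (v₀, w)).2) = γ (v₀, w) := rfl
      rw [h3, Equiv.Perm.inv_def, Equiv.symm_apply_apply]
    have hri : ∀ w, (γ (v₀, (γ⁻¹ (v₀, w)).2)).2 = w := by
      intro w
      have := fibγ v₀ (γ⁻¹ (v₀, w)).1 (γ⁻¹ (v₀, w)).2
      rw [this]
      have h3 : ((γ⁻¹ (v₀, w)).1, (γ⁻¹ (v₀, w)).2) = γ⁻¹ (v₀, w) := rfl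
      rw [h3, Equiv.Perm.inv_def, Equiv.apply_symm_apply]
    let β : Equiv.Perm W :=
      ⟨fun w => (γ (v₀, w)).2, fun w => (γ⁻¹ (v₀, w)).2, hli, hri⟩
    have hβeq : ∀ (v : V) (w : W), (γ (v, w)).2 = β w := fun v w => fibγ v v₀ w
    have hβeq' : ∀ (v : V) (w : W), (γ⁻¹ (v, w)).2 = β.symm w := fun v w => fibγ' v v₀ w
    let α : W → Equiv.Perm V := fun w =>
      ⟨fun v => (γ (v, w)).1, fun u => (γ⁻¹ (u, β w)).1,
        by
          intro v
          show (γ⁻¹ ((γ (v, w)).1, β w)).1 = v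
          have h1 : ((γ (v, w)).1, β w) = γ (v, w) := Prod.ext rfl (hβeq v w).symm
          rw [h1, Equiv.Perm.inv_def, Equiv.symm_apply_apply],
        by
          intro u
          show (γ ((γ⁻¹ (u, β w)).1, w)).1 = u
          have h2 : (γ⁻¹ (u, β w)).2 = w := by
            rw [hβeq' u (β w), Equiv.symm_apply_apply]
          have h1 : ((γ⁻¹ (u, β w)).1, w) = γ⁻¹ (u, β w) := Prod.ext rfl h2.symm
          rw [h1, Equiv.Perm.inv_def, Equiv.apply_symm_apply]⟩
    have hγeq : ∀ p : V × W, γ p = (α p.2 p.1, β p.2) := by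
      intro p
      exact Prod.ext rfl (hβeq p.1 p.2)
    refine ⟨β, ?_, α, ?_, hγeq⟩
    · rw [← hE₂]
      intro w w' hww'
      have hne : (v₀, w) ≠ (v₀, w') := fun h => hww' (congrArg Prod.snd h)
      have hcol := hγ (v₀, w) (v₀, w') hne
      rw [Eval, Eval, if_neg hww', hγeq, hγeq] at hcol
      dsimp only at hcol
      by_cases hb : β w = β w'
      · exfalso
        rw [if_pos hb] at hcol
        exact Sum.inl_ne_inr hcol
      · rw [if_neg hb] at hcol
        exact Sum.inr.inj hcol
    · intro w
      rw [← hE₁]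
      intro v v' hvv'
      have hne : (v, w) ≠ (v', w) := fun h => hvv' (congrArg Prod.fst h)
      have hcol := hγ (v, w) (v', w) hne
      rw [Eval, Eval, if_pos rfl, hγeq, hγeq] at hcol
      dsimp only at hcol
      rw [if_pos rfl] at hcol
      exact Sum.inl.inj hcol
  · rintro ⟨β, hβ, α, hα, h⟩
    intro p q hpq
    rw [Eval, Eval, h p, h q]
    dsimp only
    by_cases h2 : p.2 = q.2
    · rw [if_pos h2, if_pos (congrArg β h2)]
      have h1 : p.1 ≠ q.1 := fun h1 => hpq (Prod.ext h1 h2)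
      rw [h2]
      exact congrArg Sum.inl (hA' (α q.2) (hα q.2) p.1 q.1 h1)
    · rw [if_neg h2, if_neg (fun hh => h2 (β.injective hh))]
      exact congrArg Sum.inr (hB' β hβ p.2 q.2 h2)
end

section
/- Let (A,V) be a permutation group with (A,V) ≠ I_2. If a permutation α of V maps each 2*-orbital of A onto itself, then α maps each orbit of A on V onto itself. -/
open scoped Classical

/-- If `A ≠ I₂` and a permutation `α` of `V` maps each 2*-orbital of `A`
onto itself, then `α` maps each orbit of `A` on `V` onto itself. -/
theorem stmt3 {V : Type} [Nontrivial V] (A : Subgroup (Equiv.Perm V)) (hA : ¬ IsI2 A)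
    (α : Equiv.Perm V)
    (hα : ∀ p : Sym2 V, ¬ p.IsDiag → Sym2.map ⇑α '' pairOrbit A p = pairOrbit A p) :
    ∀ v : V, ⇑α '' ptOrbit A v = ptOrbit A v := by
  have key : ∀ β : Equiv.Perm V,
      (∀ p : Sym2 V, ¬ p.IsDiag → Sym2.map ⇑β '' pairOrbit A p = pairOrbit A p) →
      ∀ u : V, β u ∈ ptOrbit A u := by
    intro β hβ u
    have pairstep : ∀ w : V, w ≠ u →
        ∃ a ∈ A, s(a u, a w) = s(β u, β w) := by
      intro w hwu
      have hp : ¬ (s(u, w) : Sym2 V).IsDiag := by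
        simp [Sym2.mk_isDiag_iff]
        exact fun h => hwu h.symm
      have hmem : Sym2.map ⇑β s(u, w) ∈ pairOrbit A s(u, w) := by
        rw [← hβ _ hp]
        exact ⟨s(u, w), ⟨1, A.one_mem, by simp⟩, rfl⟩
      obtain ⟨a, ha, hae⟩ := hmem
      rw [Sym2.map_pair_eq] at hae
      exact ⟨a, ha, hae⟩
    by_cases hcase : ∃ w, w ≠ u ∧ w ∈ ptOrbit A u
    · obtain ⟨w, hwu, b, hb, hbw⟩ := hcase
      obtain ⟨a, ha, hae⟩ := pairstep w hwu
      rcases Sym2.eq_iff.mp hae with ⟨h1, h2⟩ | ⟨h1, h2⟩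
      · exact ⟨a, ha, h1⟩
      · refine ⟨a * b, A.mul_mem ha hb, ?_⟩
        simpa [Equiv.Perm.mul_apply, hbw] using h2
    · push_neg at hcase
      have hfix : ∀ a : Equiv.Perm V, a ∈ A → a u = u := by
        intro a ha
        by_contra h
        exact hcase (a u) h ⟨a, ha, rfl⟩
      by_cases h3 : ∃ w₁ w₂ : V, w₁ ≠ u ∧ w₂ ≠ u ∧ w₁ ≠ w₂
      · obtain ⟨w₁, w₂, hw₁, hw₂, hne⟩ := h3
        have Q : ∀ w : V, w ≠ u → β u = u ∨ β w = u := by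
          intro w hw
          obtain ⟨a, ha, hae⟩ := pairstep w hw
          rw [hfix a ha] at hae
          rcases Sym2.eq_iff.mp hae with ⟨h1, _⟩ | ⟨h1, _⟩
          · exact Or.inl h1.symm
          · exact Or.inr h1.symm
        have hβu : β u = u := by
          by_contra h
          have q1 := (Q w₁ hw₁).resolve_left h
          have q2 := (Q w₂ hw₂).resolve_left h
          exact hne (β.injective (q1.trans q2.symm))
        exact ⟨1, A.one_mem, by simpa using hβu.symm⟩
      · exfalso
        apply hA
        push_neg at h3
        obtain ⟨w, hw⟩ := exists_ne u
        have hall : ∀ x : V, x = u ∨ x = w := by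
          intro x
          by_cases hx : x = u
          · exact Or.inl hx
          · exact Or.inr (h3 x w hx hw)
        constructor
        · ext a
          simp only [Subgroup.mem_bot]
          constructor
          · intro ha
            have hau := hfix a ha
            have haw : a w = w := by
              rcases hall (a w) with h | h
              · exact absurd (a.injective (h.trans hau.symm)) hw
              · exact h
            ext x
            rcases hall x with rfl | rfl
            · simpa using hau
            · simpa using haw
          · rintro rfl; exact A.one_mem
        · rw [Nat.card_eq_two_iff]
          refine ⟨u, w, fun h => hw h.symm, ?_⟩
          ext x
          simp only [Set.mem_insert_iff, Set.mem_singleton_iff, Set.mem_univ, iff_true]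
          exact hall x
  have hαinv : ∀ p : Sym2 V, ¬ p.IsDiag →
      Sym2.map ⇑α⁻¹ '' pairOrbit A p = pairOrbit A p := by
    intro p hp
    have h1 : Sym2.map ⇑α⁻¹ ∘ Sym2.map ⇑α = id := by
      rw [← Sym2.map_comp]
      have : ⇑α⁻¹ ∘ ⇑α = id := by funext x; simp
      rw [this, Sym2.map_id]
    conv_lhs => rw [← hα p hp, ← Set.image_comp, h1, Set.image_id]
  intro v
  apply Set.eq_of_subset_of_subset
  · rintro x ⟨u, ⟨b, hb, rfl⟩, rfl⟩
    obtain ⟨a, ha, hau⟩ := key α hα (b v)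
    exact ⟨a * b, A.mul_mem ha hb, hau⟩
  · rintro x ⟨b, hb, rfl⟩
    obtain ⟨a, ha, hax⟩ := key α⁻¹ hαinv (b v)
    refine ⟨a (b v), ⟨a * b, A.mul_mem ha hb, rfl⟩, ?_⟩
    rw [hax]
    simp
end

section
/- If (A,V) is a permutation group with A ∉ GR and A ≠ I_2, then for every permutation group (B,W) the imprimitive wreath product A≀B does not belong to GR. -/
open scoped Classical

section AuxStmt4

variable {V : Type} {A : Subgroup (Equiv.Perm V)}

lemma mem_pairOrbit_self (p : Sym2 V) : p ∈ pairOrbit A p :=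
  ⟨1, A.one_mem, by simp⟩

lemma sym2_map_map (a b : Equiv.Perm V) (p : Sym2 V) :
    Sym2.map ⇑a (Sym2.map ⇑b p) = Sym2.map ⇑(a * b) p := by
  rw [Equiv.Perm.coe_mul, Sym2.map_comp]; rfl

lemma mem_pairOrbit_map {a : Equiv.Perm V} (ha : a ∈ A) {p q : Sym2 V}
    (h : q ∈ pairOrbit A p) : Sym2.map ⇑a q ∈ pairOrbit A p := by
  obtain ⟨b, hb, rfl⟩ := h
  exact ⟨a * b, A.mul_mem ha hb, (sym2_map_map a b p).symm ▸ rfl⟩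

lemma pairOrbit_eq_of_mem {p q : Sym2 V} (h : q ∈ pairOrbit A p) :
    pairOrbit A q = pairOrbit A p := by
  obtain ⟨a, ha, rfl⟩ := h
  ext r
  constructor
  · rintro ⟨b, hb, rfl⟩
    exact ⟨b * a, A.mul_mem hb ha, (sym2_map_map b a p).symm⟩
  · rintro ⟨b, hb, rfl⟩
    refine ⟨b * a⁻¹, A.mul_mem hb (A.inv_mem ha), ?_⟩
    rw [sym2_map_map, inv_mul_cancel_right]

lemma nondiag_of_mem_pairOrbit {p q : Sym2 V} (hq : q ∈ pairOrbit A p)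
    (hp : ¬ p.IsDiag) : ¬ q.IsDiag := by
  obtain ⟨a, ha, rfl⟩ := hq
  induction p using Sym2.ind with
  | _ v w =>
    rw [Sym2.map_pair_eq, Sym2.mk_isDiag_iff]
    rw [Sym2.mk_isDiag_iff] at hp
    exact fun h => hp (a.injective h)

lemma grCl_map_mem {σ : Equiv.Perm V} (hσ : σ ∈ grCl A) {p : Sym2 V}
    (hp : ¬ p.IsDiag) : Sym2.map ⇑σ p ∈ pairOrbit A p := by
  have h := hσ p hp
  rw [← h]
  exact Set.mem_image_of_mem _ (mem_pairOrbit_self p)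

lemma le_grCl : A ≤ grCl A := by
  intro a ha p hp
  ext q
  constructor
  · rintro ⟨r, hr, rfl⟩
    exact mem_pairOrbit_map ha hr
  · intro hq
    refine ⟨Sym2.map ⇑a⁻¹ q, mem_pairOrbit_map (A.inv_mem ha) hq, ?_⟩
    rw [sym2_map_map, mul_inv_cancel]
    simp

lemma graphAut_pairOrbit : graphAut (fun p => pairOrbit A p) = grCl A := by
  have key : ∀ τ : Equiv.Perm V, τ ∈ graphAut (fun p => pairOrbit A p) →
      ∀ p : Sym2 V, ¬ p.IsDiag → ∀ q ∈ pairOrbit A p, Sym2.map ⇑τ q ∈ pairOrbit A p := by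
    intro τ hτ p hp q hq
    have hqd : ¬ q.IsDiag := nondiag_of_mem_pairOrbit hq hp
    induction q using Sym2.ind with
    | _ v w =>
      rw [Sym2.mk_isDiag_iff] at hqd
      have h1 : pairOrbit A s(τ v, τ w) = pairOrbit A s(v, w) := hτ v w hqd
      rw [Sym2.map_pair_eq, ← pairOrbit_eq_of_mem hq, ← h1]
      exact mem_pairOrbit_self _
  ext σ
  constructor
  · intro hσ p hp
    apply Set.eq_of_subset_of_subset
    · rintro _ ⟨q, hq, rfl⟩
      exact key σ hσ p hp q hq
    · intro q hq
      refine ⟨Sym2.map ⇑σ⁻¹ q, key σ⁻¹ ((graphAut _).inv_mem hσ) p hp q hq, ?_⟩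
      rw [sym2_map_map, mul_inv_cancel]
      simp
  · intro hσ v w hvw
    apply pairOrbit_eq_of_mem
    have hnd : ¬ (s(v, w)).IsDiag := by rw [Sym2.mk_isDiag_iff]; exact hvw
    have h := grCl_map_mem hσ hnd
    rwa [Sym2.map_pair_eq] at h

lemma exists_mem_grCl_not_mem (hA : ¬ IsGR A) : ∃ σ, σ ∈ grCl A ∧ σ ∉ A := by
  by_contra h'
  push_neg at h'
  apply hA
  refine ⟨Set (Sym2 V), fun p => pairOrbit A p, ?_⟩
  rw [graphAut_pairOrbit]
  exact le_antisymm (fun σ hσ => h' σ hσ) le_grCl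

lemma top_isGR : IsGR (⊤ : Subgroup (Equiv.Perm V)) := by
  refine ⟨Unit, fun _ => (), ?_⟩
  apply le_antisymm le_top
  intro σ _ v w _
  rfl

lemma card_ne_two (hA : ¬ IsGR A) (hA2 : ¬ IsI2 A) : Nat.card V ≠ 2 := by
  intro hc
  rcases eq_or_ne A ⊥ with h | h
  · exact hA2 ⟨h, hc⟩
  · apply hA
    obtain ⟨x, y, hxy, huniv⟩ := Nat.card_eq_two_iff.mp hc
    have hall : ∀ z : V, z = x ∨ z = y := by
      intro z
      have : z ∈ ({x, y} : Set V) := huniv ▸ Set.mem_univ z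
      simpa using this
    have hdet : ∀ σ τ : Equiv.Perm V, σ ≠ 1 → τ ≠ 1 → σ = τ := by
      have hform : ∀ σ : Equiv.Perm V, σ ≠ 1 → σ x = y ∧ σ y = x := by
        intro σ hσ
        have hx := hall (σ x)
        have hy := hall (σ y)
        by_cases h1 : σ x = x
        · exfalso
          apply hσ
          have h2 : σ y = y := by
            rcases hy with h2 | h2
            · exact absurd (σ.injective (h2.trans h1.symm)) (Ne.symm hxy)
            · exact h2
          ext z
          rcases hall z with rfl | rfl
          · simpa using h1
          · simpa using h2
        · have h1' : σ x = y := hx.resolve_left h1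
          have h2' : σ y = x := by
            rcases hy with h2 | h2
            · exact h2
            · exact absurd (σ.injective (h1'.trans h2.symm)) hxy
          exact ⟨h1', h2'⟩
      intro σ τ hσ hτ
      obtain ⟨hσ1, hσ2⟩ := hform σ hσ
      obtain ⟨hτ1, hτ2⟩ := hform τ hτ
      ext z
      rcases hall z with rfl | rfl
      · rw [hσ1, hτ1]
      · rw [hσ2, hτ2]
    obtain ⟨a, ha, hane⟩ : ∃ a ∈ A, a ≠ 1 := by
      by_contra hno
      push_neg at hno
      exact h ((Subgroup.eq_bot_iff_forall A).mpr hno)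
    have hAtop : A = ⊤ := by
      apply le_antisymm le_top
      intro σ _
      by_cases hσ : σ = 1
      · rw [hσ]; exact A.one_mem
      · rw [hdet σ a hσ hane]; exact ha
    rw [hAtop]
    exact top_isGR

lemma three_elems [Nontrivial V] (hc : Nat.card V ≠ 2) (v : V) :
    ∃ u₁ u₂ : V, u₁ ≠ v ∧ u₂ ≠ v ∧ u₁ ≠ u₂ := by
  obtain ⟨u, hu⟩ := exists_ne v
  by_contra h
  push_neg at h
  apply hc
  have hall : ∀ x : V, x = v ∨ x = u := by
    intro x
    by_cases hx : x = v
    · exact Or.inl hx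
    · exact Or.inr (h x u hx hu)
  apply Nat.card_eq_two_iff.mpr
  refine ⟨u, v, hu, ?_⟩
  ext z
  simp only [Set.mem_insert_iff, Set.mem_singleton_iff, Set.mem_univ, iff_true]
  rcases hall z with rfl | rfl
  · exact Or.inr rfl
  · exact Or.inl rfl

lemma grCl_orbit_pres [Nontrivial V] (hc : Nat.card V ≠ 2) {σ : Equiv.Perm V}
    (hσ : σ ∈ grCl A) (v : V) : σ v ∈ ptOrbit A v := by
  by_cases hfix : ∃ u, u ≠ v ∧ u ∈ ptOrbit A v
  · obtain ⟨u, huv, b, hb, hbv⟩ := hfix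
    have hnd : ¬ (s(v, u)).IsDiag := by rw [Sym2.mk_isDiag_iff]; exact fun h => huv h.symm
    obtain ⟨a, ha, hap⟩ := grCl_map_mem hσ hnd
    rw [Sym2.map_pair_eq, Sym2.map_pair_eq] at hap
    rcases Sym2.eq_iff.mp hap with ⟨h1, _⟩ | ⟨_, h2⟩
    · exact ⟨a, ha, h1⟩
    · exact ⟨a * b, A.mul_mem ha hb, by simp [hbv, h2]⟩
  · push_neg at hfix
    have hfix' : ∀ a ∈ A, a v = v := by
      intro a ha
      by_contra hne
      exact hfix (a v) hne ⟨a, ha, rfl⟩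
    suffices h : σ v = v by
      exact ⟨1, A.one_mem, by simp [h]⟩
    by_contra hne
    obtain ⟨u₁, u₂, h1, h2, h12⟩ := three_elems hc v
    have key : ∀ u, u ≠ v → σ u = v := by
      intro u hu
      have hnd : ¬ (s(v, u)).IsDiag := by rw [Sym2.mk_isDiag_iff]; exact fun h => hu h.symm
      obtain ⟨a, ha, hap⟩ := grCl_map_mem hσ hnd
      rw [Sym2.map_pair_eq, Sym2.map_pair_eq, hfix' a ha] at hap
      rcases Sym2.eq_iff.mp hap with ⟨h3, _⟩ | ⟨h3, _⟩
      · exact absurd h3.symm hne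
      · exact h3.symm
    exact h12 (σ.injective ((key u₁ h1).trans (key u₂ h2).symm))

/-- The permutation of `V × W` acting as `a` on the fiber over `w₀` and as the
identity elsewhere. -/
noncomputable def fiberPerm {V W : Type} (a : Equiv.Perm V) (w₀ : W) : Equiv.Perm (V × W) where
  toFun p := (if p.2 = w₀ then a p.1 else p.1, p.2)
  invFun p := (if p.2 = w₀ then a⁻¹ p.1 else p.1, p.2)
  left_inv := by rintro ⟨v, w⟩; by_cases h : w = w₀ <;> simp [h]
  right_inv := by rintro ⟨v, w⟩; by_cases h : w = w₀ <;> simp [h]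

lemma fiberPerm_apply {W : Type} (a : Equiv.Perm V) (w₀ : W) (v : V) (w : W) :
    fiberPerm a w₀ (v, w) = (if w = w₀ then a v else v, w) := rfl

lemma fiberPerm_mem {W : Type} {a : Equiv.Perm V} (ha : a ∈ A) (w₀ : W)
    (B : Subgroup (Equiv.Perm W)) : fiberPerm a w₀ ∈ imprimWr A B := by
  refine ⟨1, B.one_mem, fun w => if w = w₀ then a else 1,
    fun w => by dsimp only; split_ifs; exacts [ha, A.one_mem], ?_⟩
  rintro ⟨v, w⟩
  rw [fiberPerm_apply]
  by_cases h : w = w₀ <;> simp [h]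

end AuxStmt4

/-- If `A ∉ GR` and `A ≠ I₂`, then for every permutation group `(B, W)`
the imprimitive wreath product `A ≀ B` does not belong to GR. -/
theorem stmt4 {V : Type} [Nontrivial V] (A : Subgroup (Equiv.Perm V))
    (hA : ¬ IsGR A) (hA2 : ¬ IsI2 A) :
    ∀ (W : Type) [Nontrivial W] (B : Subgroup (Equiv.Perm W)),
      ¬ IsGR (imprimWr A B) := by
  intro W _ B hGR
  obtain ⟨C, E, hE⟩ := hGR
  obtain ⟨σ, hσcl, hσA⟩ := exists_mem_grCl_not_mem hA
  have hc := card_ne_two hA hA2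
  obtain ⟨w₀⟩ : Nonempty W := inferInstance
  -- every `fiberPerm a w₀` with `a ∈ A` preserves the coloring `E`
  have hEmem : ∀ a : Equiv.Perm V, a ∈ A → ∀ x y : V × W, x ≠ y →
      E s(fiberPerm a w₀ x, fiberPerm a w₀ y) = E s(x, y) := by
    intro a ha x y hxy
    have hmem : fiberPerm a w₀ ∈ graphAut E := by
      rw [hE]; exact fiberPerm_mem ha w₀ B
    exact hmem x y hxy
  -- the key claim: `γ := fiberPerm σ w₀` preserves the coloring `E`
  have hγE : fiberPerm σ w₀ ∈ graphAut E := by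
    rintro ⟨v, w⟩ ⟨u, w'⟩ hpq
    by_cases h1 : w = w₀ <;> by_cases h2 : w' = w₀
    · -- both in the fiber over `w₀`
      have hw : w = w' := h1.trans h2.symm
      have hvu : v ≠ u := fun h => hpq (by rw [h, hw])
      have hnd : ¬ (s(v, u)).IsDiag := by rw [Sym2.mk_isDiag_iff]; exact hvu
      obtain ⟨a, ha, hap⟩ := grCl_map_mem hσcl hnd
      rw [Sym2.map_pair_eq, Sym2.map_pair_eq] at hap
      rw [fiberPerm_apply, fiberPerm_apply, if_pos h1, if_pos h2]
      have hsym : s((a v, w), (a u, w')) = s((σ v, w), (σ u, w')) := by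
        rw [← hw]
        have := congrArg (Sym2.map (fun x : V => (x, w))) hap
        rwa [Sym2.map_pair_eq, Sym2.map_pair_eq] at this
      rw [← hsym]
      have h5 := hEmem a ha (v, w) (u, w') hpq
      rwa [fiberPerm_apply, fiberPerm_apply, if_pos h1, if_pos h2] at h5
    · -- `w = w₀`, `w' ≠ w₀`
      obtain ⟨a, ha, hav⟩ := grCl_orbit_pres hc hσcl v
      have h5 := hEmem a ha (v, w) (u, w') hpq
      rw [fiberPerm_apply, fiberPerm_apply, if_pos h1, if_neg h2] at h5
      rw [fiberPerm_apply, fiberPerm_apply, if_pos h1, if_neg h2]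
      rwa [hav] at h5
    · -- `w ≠ w₀`, `w' = w₀`
      obtain ⟨a, ha, hau⟩ := grCl_orbit_pres hc hσcl u
      have h5 := hEmem a ha (v, w) (u, w') hpq
      rw [fiberPerm_apply, fiberPerm_apply, if_neg h1, if_pos h2] at h5
      rw [fiberPerm_apply, fiberPerm_apply, if_neg h1, if_pos h2]
      rwa [hau] at h5
    · -- both outside the fiber over `w₀`
      rw [fiberPerm_apply, fiberPerm_apply, if_neg h1, if_neg h2]
  -- hence `fiberPerm σ w₀ ∈ A ≀ B`, forcing `σ ∈ A`, a contradiction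
  rw [hE] at hγE
  obtain ⟨β, hβ, α, hα, h⟩ := hγE
  apply hσA
  have hσeq : σ = α w₀ := by
    ext v
    have := h (v, w₀)
    rw [fiberPerm_apply, if_pos rfl] at this
    exact (Prod.ext_iff.mp this).1
  rw [hσeq]
  exact hα w₀
end

section
/- Let (A,V) be a permutation group with A ∈ GR or A = I_2, and let T be the set of orbits of A on V. If for a permutation group (B,W) the parallel multiple B×I_T belongs to GR, then the imprimitive wreath product A≀B belongs to GR. -/
open scoped Classical

namespace Stmt6Aux

variable {V : Type} (A : Subgroup (Equiv.Perm V))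

def tmap (v : V) : orbitType A := ⟨ptOrbit A v, v, rfl⟩

lemma ptOrbit_eq_of_mem {a : Equiv.Perm V} (ha : a ∈ A) (v : V) :
    ptOrbit A (a v) = ptOrbit A v := by
  ext u
  constructor
  · rintro ⟨b, hb, rfl⟩
    exact ⟨b * a, A.mul_mem hb ha, rfl⟩
  · rintro ⟨b, hb, rfl⟩
    exact ⟨b * a⁻¹, A.mul_mem hb (A.inv_mem ha), by simp⟩

lemma tmap_apply {a : Equiv.Perm V} (ha : a ∈ A) (v : V) :
    tmap A (a v) = tmap A v := Subtype.ext (ptOrbit_eq_of_mem A ha v)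

lemma tmap_injective (h : A = ⊥) : Function.Injective (tmap A) := by
  intro u v huv
  have h1 : u ∈ ptOrbit A v := by
    have h0 : u ∈ ptOrbit A u := ⟨1, A.one_mem, rfl⟩
    have e : ptOrbit A u = ptOrbit A v := congrArg Subtype.val huv
    exact e ▸ h0
  obtain ⟨a, ha, rfl⟩ := h1
  have : a = 1 := by rwa [h, Subgroup.mem_bot] at ha
  rw [this]; rfl

noncomputable def rep (o : orbitType A) : V := o.2.choose

lemma tmap_rep (o : orbitType A) : tmap A (rep A o) = o :=
  (Subtype.ext o.2.choose_spec).symm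

variable {W : Type}

/-- The projection `V × W → W × T` sending a point to its fiber and the orbit of
its first coordinate. -/
def gmap (p : V × W) : W × orbitType A := (p.2, tmap A p.1)

/-- The big colored graph on `V × W`. -/
noncomputable def bigE {C₀ CF : Type} (E₀ : Sym2 V → C₀)
    (F : Sym2 (W × orbitType A) → CF) : Sym2 (V × W) → Option C₀ × Option CF :=
  Sym2.lift ⟨fun p q =>
    (if p.2 = q.2 then some (E₀ s(p.1, q.1)) else none,
     if gmap A p = gmap A q then none else some (F s(gmap A p, gmap A q))), by
    intro p q
    dsimp only
    refine Prod.ext ?_ ?_ <;> dsimp only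
    · by_cases h : p.2 = q.2
      · rw [if_pos h, if_pos h.symm, Sym2.eq_swap]
      · rw [if_neg h, if_neg fun hh => h hh.symm]
    · by_cases h : gmap A p = gmap A q
      · rw [if_pos h, if_pos h.symm]
      · rw [if_neg h, if_neg fun hh => h hh.symm, Sym2.eq_swap]⟩

/-- δ₀: the induced map on `W × T`. -/
noncomputable def delta0 (γ : Equiv.Perm (V × W)) (x : W × orbitType A) :
    W × orbitType A :=
  gmap A (γ (rep A x.2, x.1))

lemma key {V W C₀ CF : Type}
    (A : Subgroup (Equiv.Perm V)) (B : Subgroup (Equiv.Perm W))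
    (E₀ : Sym2 V → C₀) (hA1 : A ≤ graphAut E₀)
    (hA2 : graphAut E₀ ≤ A ∨ A = ⊥)
    (F : Sym2 (W × orbitType A) → CF)
    (hF : graphAut F = parMul B (orbitType A)) :
    IsGR (imprimWr A B) := by
  classical
  refine ⟨Option C₀ × Option CF, bigE A E₀ F, ?_⟩
  have hbE : ∀ p q : V × W, bigE A E₀ F s(p, q) =
      (if p.2 = q.2 then some (E₀ s(p.1, q.1)) else none,
       if gmap A p = gmap A q then none else some (F s(gmap A p, gmap A q))) :=
    fun p q => Sym2.lift_mk _ p q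
  have hrepg : ∀ p : V × W, gmap A (rep A (tmap A p.1), p.2) = gmap A p := by
    intro p
    show (p.2, tmap A (rep A (tmap A p.1))) = (p.2, tmap A p.1)
    rw [tmap_rep]
  have hgx : ∀ x : W × orbitType A, gmap A (rep A x.2, x.1) = x := by
    intro x
    show (x.1, tmap A (rep A x.2)) = x
    rw [tmap_rep]
  ext γ
  constructor
  · -- γ ∈ Aut(bigE) → γ ∈ A ≀ B
    intro hmem
    have hγ : ∀ p q : V × W, p ≠ q →
        bigE A E₀ F s(γ p, γ q) = bigE A E₀ F s(p, q) := hmem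
    have hmem' := (graphAut (bigE A E₀ F)).inv_mem hmem
    have hγ' : ∀ p q : V × W, p ≠ q →
        bigE A E₀ F s(γ⁻¹ p, γ⁻¹ q) = bigE A E₀ F s(p, q) := hmem'
    -- same-gmap points keep same gmap
    have hwd : ∀ σ : Equiv.Perm (V × W), (∀ p q : V × W, p ≠ q →
        bigE A E₀ F s(σ p, σ q) = bigE A E₀ F s(p, q)) →
        ∀ p q : V × W, gmap A p = gmap A q → gmap A (σ p) = gmap A (σ q) := by
      intro σ hσ p q hgpq
      by_cases hpq : p = q
      · rw [hpq]
      · have h := congrArg Prod.snd (hσ p q hpq)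
        rw [hbE, hbE] at h
        dsimp only at h
        rw [if_pos hgpq] at h
        by_contra hne
        rw [if_neg hne] at h
        exact Option.some_ne_none _ h
    -- fibers are preserved
    have hc1fwd : ∀ (v v' : V) (w : W), (γ (v, w)).2 = (γ (v', w)).2 := by
      intro v v' w
      by_cases hvv : v = v'
      · rw [hvv]
      · have h := congrArg Prod.fst
          (hγ (v, w) (v', w) (fun hh => hvv (congrArg Prod.fst hh)))
        rw [hbE, hbE] at h
        dsimp only at h
        by_contra hne
        rw [if_neg hne, if_pos rfl] at h
        exact Option.some_ne_none _ h.symm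
    -- δ is a permutation of W × T
    have hcanc1 : ∀ x, delta0 A γ⁻¹ (delta0 A γ x) = x := by
      intro x
      have h2 := hwd γ⁻¹ hγ'
        (rep A (tmap A ((γ (rep A x.2, x.1)).1)), (γ (rep A x.2, x.1)).2)
        (γ (rep A x.2, x.1)) (hrepg (γ (rep A x.2, x.1)))
      rw [Equiv.Perm.coe_inv, Equiv.symm_apply_apply] at h2
      exact h2.trans (hgx x)
    have hcanc2 : ∀ x, delta0 A γ (delta0 A γ⁻¹ x) = x := by
      intro x
      have h2 := hwd γ hγ
        (rep A (tmap A ((γ⁻¹ (rep A x.2, x.1)).1)), (γ⁻¹ (rep A x.2, x.1)).2)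
        (γ⁻¹ (rep A x.2, x.1)) (hrepg (γ⁻¹ (rep A x.2, x.1)))
      rw [Equiv.Perm.coe_inv, Equiv.apply_symm_apply] at h2
      exact h2.trans (hgx x)
    -- δ is an automorphism of F
    have hδF : (⟨delta0 A γ, delta0 A γ⁻¹, hcanc1, hcanc2⟩ :
        Equiv.Perm (W × orbitType A)) ∈ graphAut F := by
      show ∀ x y : W × orbitType A, x ≠ y →
        F s(delta0 A γ x, delta0 A γ y) = F s(x, y)
      intro x y hxy
      have hpq : (rep A x.2, x.1) ≠ (rep A y.2, y.1) := by
        intro hh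
        apply hxy
        rw [← hgx x, ← hgx y, hh]
      have h := congrArg Prod.snd (hγ _ _ hpq)
      rw [hbE, hbE] at h
      dsimp only at h
      rw [hgx x, hgx y, if_neg hxy] at h
      by_cases hc : gmap A (γ (rep A x.2, x.1)) = gmap A (γ (rep A y.2, y.1))
      · rw [if_pos hc] at h
        exact absurd h.symm (Option.some_ne_none _)
      · rw [if_neg hc] at h
        exact Option.some_injective _ h
    rw [hF] at hδF
    have hδF' : ∃ b ∈ B, ∀ x : W × orbitType A,
        delta0 A γ x = (b x.1, x.2) := hδF
    obtain ⟨β, hβ, hβeq⟩ := hδF'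
    -- consequences
    have hsndβg : ∀ p : V × W, (γ p).2 = β p.2 := by
      intro p
      have h1 : (γ (rep A (tmap A p.1), p.2)).2 = β p.2 :=
        congrArg Prod.fst (hβeq (p.2, tmap A p.1))
      have h0 : (γ p).2 = (γ (rep A (tmap A p.1), p.2)).2 :=
        hc1fwd p.1 (rep A (tmap A p.1)) p.2
      exact h0.trans h1
    have horb : ∀ (v : V) (w : W), tmap A ((γ (v, w)).1) = tmap A v := by
      intro v w
      have h4 : delta0 A γ (gmap A (v, w)) = gmap A (γ (v, w)) :=
        hwd γ hγ (rep A (tmap A (v, w).1), (v, w).2) (v, w) (hrepg (v, w))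
      have h3 : gmap A (γ (v, w)) = (β w, tmap A v) := by
        rw [← h4]
        exact hβeq (w, tmap A v)
      exact congrArg Prod.snd h3
    -- assemble
    obtain ⟨αf, hαf⟩ : ∃ α : W → Equiv.Perm V, ∀ (w : W) (v : V),
        α w v = (γ (v, w)).1 := by
      refine ⟨fun w => ⟨fun v => (γ (v, w)).1, fun v => (γ⁻¹ (v, β w)).1, ?_, ?_⟩,
        fun w v => rfl⟩
      · -- left inverse
        intro v
        have hp : ((γ (v, w)).1, β w) = γ (v, w) :=
          Prod.ext rfl (hsndβg (v, w)).symm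
        show (γ⁻¹ ((γ (v, w)).1, β w)).1 = v
        rw [hp, Equiv.Perm.coe_inv, Equiv.symm_apply_apply]
      · -- right inverse
        intro v
        have h3 := hsndβg (γ⁻¹ (v, β w))
        rw [Equiv.Perm.coe_inv, Equiv.apply_symm_apply] at h3
        have h2 : (γ⁻¹ (v, β w)).2 = w := β.injective h3.symm
        have hp : ((γ⁻¹ (v, β w)).1, w) = γ⁻¹ (v, β w) := Prod.ext rfl h2.symm
        show (γ ((γ⁻¹ (v, β w)).1, w)).1 = v
        rw [hp, Equiv.Perm.coe_inv, Equiv.apply_symm_apply]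
    show ∃ b ∈ B, ∃ α : W → Equiv.Perm V, (∀ w, α w ∈ A) ∧
      ∀ p : V × W, γ p = (α p.2 p.1, b p.2)
    refine ⟨β, hβ, αf, fun w => ?_, fun p => Prod.ext (hαf p.2 p.1).symm (hsndβg p)⟩
    rcases hA2 with hA2 | hA2
    · refine hA2 ?_
      show ∀ v v' : V, v ≠ v' → E₀ s(αf w v, αf w v') = E₀ s(v, v')
      intro v v' hvv
      rw [hαf w v, hαf w v']
      have h := congrArg Prod.fst
        (hγ (v, w) (v', w) (fun hh => hvv (congrArg Prod.fst hh)))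
      rw [hbE, hbE] at h
      dsimp only at h
      rw [if_pos (hc1fwd v v' w), if_pos rfl] at h
      exact Option.some_injective _ h
    · have h1 : αf w = 1 := by
        refine Equiv.ext fun v => ?_
        rw [hαf w v]
        exact tmap_injective A hA2 (horb v w)
      rw [h1]
      exact A.one_mem
  · -- γ ∈ A ≀ B → γ ∈ Aut(bigE)
    intro hmem
    have hmem2 : ∃ b ∈ B, ∃ α : W → Equiv.Perm V, (∀ w, α w ∈ A) ∧
        ∀ p : V × W, γ p = (α p.2 p.1, b p.2) := hmem
    obtain ⟨β, hβ, α, hα, hγeq⟩ := hmem2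
    show ∀ p q : V × W, p ≠ q → bigE A E₀ F s(γ p, γ q) = bigE A E₀ F s(p, q)
    rintro ⟨v, w⟩ ⟨v', w'⟩ hpq
    rw [hγeq (v, w), hγeq (v', w'), hbE, hbE]
    dsimp only
    have hg1 : gmap A (α w v, β w) = ((β w, tmap A v) : W × orbitType A) := by
      show (β w, tmap A (α w v)) = (β w, tmap A v)
      rw [tmap_apply A (hα w)]
    have hg2 : gmap A (α w' v', β w') = ((β w', tmap A v') : W × orbitType A) := by
      show (β w', tmap A (α w' v')) = (β w', tmap A v')
      rw [tmap_apply A (hα w')]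
    have hgp : gmap A ((v, w) : V × W) = ((w, tmap A v) : W × orbitType A) := rfl
    have hgq : gmap A ((v', w') : V × W) = ((w', tmap A v') : W × orbitType A) := rfl
    rw [hg1, hg2]
    refine Prod.ext ?_ ?_ <;> dsimp only
    · by_cases h2 : w = w'
      · subst h2
        rw [if_pos rfl, if_pos rfl]
        have hvv : v ≠ v' := fun h => hpq (by rw [h])
        have hmm : ∀ a b : V, a ≠ b → E₀ s(α w a, α w b) = E₀ s(a, b) := hA1 (hα w)
        rw [hmm v v' hvv]
      · rw [if_neg (fun hh => h2 (β.injective hh)), if_neg h2]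
    · by_cases h3 : gmap A ((v, w) : V × W) = gmap A ((v', w') : V × W)
      · have h31 : w = w' := congrArg Prod.fst h3
        have h32 : tmap A v = tmap A v' := congrArg Prod.snd h3
        rw [if_pos h3, if_pos (by rw [h31, h32])]
      · have h4 : ((β w, tmap A v) : W × orbitType A) ≠ (β w', tmap A v') := by
          intro hh
          apply h3
          have h41 : β w = β w' := congrArg Prod.fst hh
          have h42 : tmap A v = tmap A v' := congrArg Prod.snd hh
          show ((w, tmap A v) : W × orbitType A) = (w', tmap A v')
          rw [β.injective h41, h42]
        rw [if_neg h3, if_neg h4]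
        have hmem3 : (β.prodCongr (Equiv.refl (orbitType A))) ∈ graphAut F := by
          rw [hF]
          show ∃ b ∈ B, ∀ x : W × orbitType A,
            (β.prodCongr (Equiv.refl (orbitType A))) x = (b x.1, x.2)
          exact ⟨β, hβ, fun x => rfl⟩
        have h5 : ∀ x y : W × orbitType A, x ≠ y →
            F s((β.prodCongr (Equiv.refl (orbitType A))) x,
              (β.prodCongr (Equiv.refl (orbitType A))) y) = F s(x, y) := hmem3
        exact congrArg some (h5 (w, tmap A v) (w', tmap A v') h3)

end Stmt6Aux
/-- If `A ∈ GR` or `A = I₂`, and the parallel multiple `B × I_T` (where `T`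
is the set of orbits of `A` on `V`) belongs to GR, then `A ≀ B` belongs to GR. -/
theorem stmt6 {V W : Type} [Nontrivial V] [Nontrivial W]
    (A : Subgroup (Equiv.Perm V)) (B : Subgroup (Equiv.Perm W))
    (hA : IsGR A ∨ IsI2 A) (h : IsGR (parMul B (orbitType A))) :
    IsGR (imprimWr A B) := by
  obtain ⟨CF, F, hF⟩ := h
  rcases hA with hGR | hI2
  · obtain ⟨C₀, E₀, hE₀⟩ := hGR
    exact Stmt6Aux.key A B E₀ (le_of_eq hE₀.symm) (Or.inl (le_of_eq hE₀)) F hF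
  · refine Stmt6Aux.key A B (fun _ : Sym2 V => ()) ?_ (Or.inr hI2.1) F hF
    intro σ _ v w _
    rfl
end
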